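/- Let α > 0, ω ∈ ℝ, c ∈ ℂ, and set g₀ᵇ(t) = α e^{iωt}, g₁ᵇ(t) = c e^{iωt}. For each k ∈ ℂ, the unique solution ψ(t,k) of ψ_t + 2ik²σ₃ψ = Vᵇ(t,k)ψ with ψ(0,k) = I is given explicitly by ψ(t,k) = exp( (iωt/2) σ₃ ) · exp( t·W(k) ), where W(k) = −(iω/2) σ₃ − 2ik² σ₃ + Vᵇ(0,k); here Vᵇ(0,k) is the matrix with entries −iα², 2kα + ic, 2kα − i·conj(c), iα², and exp denotes the matrix exponential. -/

import Mathlib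

open Matrix Complex

noncomputable section

/-- The third Pauli matrix `σ₃ = diag(1, -1)`. -/
def sigma3 : Matrix (Fin 2) (Fin 2) ℂ := !![1, 0; 0, -1]

/-- The first Pauli matrix `σ₁`. -/
def sigma1 : Matrix (Fin 2) (Fin 2) ℂ := !![0, 1; 1, 0]

/-- The coefficient matrix `Vᵇ(t,k)` of the `t`-part of the Lax pair of the defocusing NLS
associated with the boundary data `(g₀ᵇ, g₁ᵇ)`. -/
def Vb (g₀ g₁ : ℝ → ℂ) (t : ℝ) (k : ℂ) : Matrix (Fin 2) (Fin 2) ℂ :=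
  !![-Complex.I * (‖g₀ t‖ : ℂ) ^ 2, 2 * k * g₀ t + Complex.I * g₁ t;
     2 * k * (starRingEnd ℂ) (g₀ t) - Complex.I * (starRingEnd ℂ) (g₁ t),
       Complex.I * (‖g₀ t‖ : ℂ) ^ 2]

/-! The diagonal gauge `e^{-tS}`, `S = (iω/2)σ₃`, freezes the boundary data: conjugation by it
multiplies the off-diagonal entries of `Vᵇ(t,k)` by `e^{∓iωt}`, while `|g₀ᵇ(t)| = α` is constant, so
`e^{-tS} Vᵇ(t,k) e^{tS} = Vᵇ(0,k)`. Hence `φ = e^{-tS} ψ` solves the autonomous equation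
`φ' = W φ`, `φ(0) = I`, and `e^{-tW} φ(t)` has zero derivative, so `φ(t) = e^{tW}`. -/

namespace Matrix

attribute [local instance] Matrix.linftyOpNormedAddCommGroup Matrix.linftyOpNormedSpace

variable {𝕜 𝕜' m n : Type*} [NontriviallyNormedField 𝕜] [NontriviallyNormedField 𝕜']
  [NormedAlgebra 𝕜 𝕜'] [Fintype m] [Fintype n] [DecidableEq m] [DecidableEq n]

theorem hasDerivAt_of_forall_hasDerivAt_apply {ψ : 𝕜 → Matrix m n 𝕜'} {D : Matrix m n 𝕜'}
    {t : 𝕜} (h : ∀ i j, HasDerivAt (fun s => ψ s i j) (D i j) t) : HasDerivAt ψ D t := by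
  have hsum : HasDerivAt (fun s => ∑ i, ∑ j, ψ s i j • single i j (1 : 𝕜'))
      (∑ i, ∑ j, D i j • single i j (1 : 𝕜')) t :=
    .fun_sum fun i _ => .fun_sum fun j _ => (h i j).smul_const _
  simpa only [smul_single, smul_eq_mul, mul_one, ← matrix_eq_sum_single] using hsum

end Matrix

section LinearODE

variable {𝔸 : Type*} [NormedRing 𝔸] [NormedAlgebra ℝ 𝔸] [CompleteSpace 𝔸]

theorem exp_smul_mul_exp_smul_neg (x : 𝔸) (t : ℝ) :
    NormedSpace.exp (t • x) * NormedSpace.exp (t • -x) = 1 := by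
  have hball : ∀ y : 𝔸, y ∈ Metric.eball 0 (NormedSpace.expSeries ℝ 𝔸).radius := fun y =>
    (NormedSpace.expSeries_radius_eq_top ℝ 𝔸).symm ▸ edist_lt_top _ _
  have hcomm : Commute (t • x) (t • -x) := (Commute.refl x).neg_right.smul_left t |>.smul_right t
  rw [← NormedSpace.exp_add_of_commute_of_mem_ball hcomm (hball _) (hball _), smul_neg,
    add_neg_cancel, NormedSpace.exp_zero]

theorem eq_exp_smul_mul_of_hasDerivAt {W : 𝔸} {φ : ℝ → 𝔸}
    (hφ : ∀ t, HasDerivAt φ (W * φ t) t) (t : ℝ) : φ t = NormedSpace.exp (t • W) * φ 0 := by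
  have hderiv : ∀ s, HasDerivAt (fun s : ℝ => NormedSpace.exp (s • -W) * φ s) 0 s := by
    intro s
    convert (hasDerivAt_exp_smul_const (-W) s).mul (hφ s) using 1
    · rfl
    noncomm_ring
  have hconst := is_const_of_deriv_eq_zero (fun s => (hderiv s).differentiableAt)
    (fun s => (hderiv s).deriv) t 0
  calc φ t = NormedSpace.exp (t • W) * (NormedSpace.exp (t • -W) * φ t) := by
        rw [← mul_assoc, exp_smul_mul_exp_smul_neg, one_mul]
    _ = NormedSpace.exp (t • W) * φ 0 := by
        simpa using congrArg (NormedSpace.exp (t • W) * ·) hconst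

theorem eq_exp_smul_mul_exp_smul_mul_of_hasDerivAt {A : ℝ → 𝔸} {S : 𝔸} {ψ : ℝ → 𝔸}
    (hψ : ∀ t, HasDerivAt ψ (A t * ψ t) t)
    (hA : ∀ t, NormedSpace.exp (t • -S) * A t = A 0 * NormedSpace.exp (t • -S)) (t : ℝ) :
    ψ t = NormedSpace.exp (t • S) * NormedSpace.exp (t • (A 0 - S)) * ψ 0 := by
  have hφ : ∀ s, HasDerivAt (fun s : ℝ => NormedSpace.exp (s • -S) * ψ s)
      ((A 0 - S) * (NormedSpace.exp (s • -S) * ψ s)) s := by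
    intro s
    convert (hasDerivAt_exp_smul_const' (-S) s).mul (hψ s) using 1
    · rfl
    rw [← mul_assoc _ (A s), hA]
    noncomm_ring
  calc ψ t = NormedSpace.exp (t • S) * (NormedSpace.exp (t • -S) * ψ t) := by
        rw [← mul_assoc, exp_smul_mul_exp_smul_neg, one_mul]
    _ = NormedSpace.exp (t • S) * NormedSpace.exp (t • (A 0 - S)) * ψ 0 := by
        rw [eq_exp_smul_mul_of_hasDerivAt hφ t, zero_smul, NormedSpace.exp_zero, one_mul,
          mul_assoc]

end LinearODE

section SingleExponential

def timeHarmonic (a : ℂ) (ω t : ℝ) : ℂ := a * cexp (I * ω * t)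

def laxTimeMatrix (g₀ g₁ : ℝ → ℂ) (t : ℝ) (k : ℂ) : Matrix (Fin 2) (Fin 2) ℂ :=
  Vb g₀ g₁ t k - (2 * I * k ^ 2) • sigma3

theorem norm_timeHarmonic (a : ℂ) (ω t : ℝ) : ‖timeHarmonic a ω t‖ = ‖a‖ := by
  simp [timeHarmonic, Complex.norm_exp]

theorem timeHarmonic_zero (a : ℂ) (ω : ℝ) : timeHarmonic a ω 0 = a := by
  simp [timeHarmonic]

theorem conj_timeHarmonic (a : ℂ) (ω t : ℝ) :
    starRingEnd ℂ (timeHarmonic a ω t) = starRingEnd ℂ a * cexp (-(I * ω * t)) := by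
  simp [timeHarmonic, ← Complex.exp_conj]

theorem exp_smul_sigma3 (z : ℂ) :
    NormedSpace.exp (z • sigma3) = !![cexp z, 0; 0, cexp (-z)] := by
  have hdiag : z • sigma3 = Matrix.diagonal ![z, -z] := by
    ext i j; fin_cases i <;> fin_cases j <;> simp [sigma3]
  rw [hdiag, Matrix.exp_diagonal]
  ext i j
  fin_cases i <;> fin_cases j <;> simp [Pi.coe_exp, ← Complex.exp_eq_exp_ℂ]

theorem exp_smul_sigma3_mul_Vb_timeHarmonic (a c : ℂ) (ω t : ℝ) (k : ℂ) :
    NormedSpace.exp ((-(I * ω * t / 2)) • sigma3) *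
        Vb (timeHarmonic a ω) (timeHarmonic c ω) t k =
      Vb (timeHarmonic a ω) (timeHarmonic c ω) 0 k *
        NormedSpace.exp ((-(I * ω * t / 2)) • sigma3) := by
  have hhalf : cexp (-(I * ω * t / 2)) * cexp (I * ω * t) = cexp (I * ω * t / 2) := by
    rw [← Complex.exp_add]; ring_nf
  have hhalf' : cexp (I * ω * t / 2) * cexp (-(I * ω * t)) = cexp (-(I * ω * t / 2)) := by
    rw [← Complex.exp_add]; ring_nf
  rw [exp_smul_sigma3, neg_neg]
  ext i j
  fin_cases i <;> fin_cases j <;>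
    simp [Vb, Matrix.mul_apply, norm_timeHarmonic, conj_timeHarmonic, timeHarmonic_zero]
  · ring
  · rw [timeHarmonic, timeHarmonic]
    linear_combination (2 * k * a + I * c) * hhalf
  · linear_combination (2 * k * starRingEnd ℂ a - I * starRingEnd ℂ c) * hhalf'
  · ring

theorem exp_smul_mul_laxTimeMatrix_timeHarmonic (a c k : ℂ) (ω t : ℝ) :
    NormedSpace.exp (t • -((I * ω / 2) • sigma3)) *
        laxTimeMatrix (timeHarmonic a ω) (timeHarmonic c ω) t k =
      laxTimeMatrix (timeHarmonic a ω) (timeHarmonic c ω) 0 k *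
        NormedSpace.exp (t • -((I * ω / 2) • sigma3)) := by
  have hscalar : t • -((I * ω / 2) • sigma3) = (-(I * ω * t / 2)) • sigma3 := by
    rw [← Complex.coe_smul, smul_neg, smul_smul, ← neg_smul]
    ring_nf
  have hcomm :
      Commute (NormedSpace.exp ((-(I * ω * t / 2)) • sigma3)) ((2 * I * k ^ 2) • sigma3) :=
    ((Commute.refl sigma3).smul_left _ |>.smul_right _).exp_left
  rw [hscalar, laxTimeMatrix, laxTimeMatrix, mul_sub, sub_mul, hcomm.eq,
    exp_smul_sigma3_mul_Vb_timeHarmonic]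

section

-- An arbitrary normed-algebra structure: `NormedSpace.exp` depends only on the topology.
attribute [local instance] Matrix.linftyOpNormedRing Matrix.linftyOpNormedAlgebra

theorem eq_exp_smul_mul_exp_smul_of_hasDerivAt_laxTimeMatrix (a c k : ℂ) (ω : ℝ)
    {ψ : ℝ → Matrix (Fin 2) (Fin 2) ℂ}
    (hψ : ∀ t, HasDerivAt ψ (laxTimeMatrix (timeHarmonic a ω) (timeHarmonic c ω) t k * ψ t) t)
    (t : ℝ) :
    ψ t = NormedSpace.exp (t • ((I * ω / 2) • sigma3)) *
      NormedSpace.exp (t • (laxTimeMatrix (timeHarmonic a ω) (timeHarmonic c ω) 0 k -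
        (I * ω / 2) • sigma3)) * ψ 0 :=
  eq_exp_smul_mul_exp_smul_mul_of_hasDerivAt hψ
    (exp_smul_mul_laxTimeMatrix_timeHarmonic a c k ω) t

end

end SingleExponential

theorem psi_explicit_single_exponential_general (α ω : ℝ) (c : ℂ) (k : ℂ)
    (ψ : ℝ → Matrix (Fin 2) (Fin 2) ℂ)
    (hODE : ∀ t : ℝ, ∀ i j : Fin 2,
      HasDerivAt (fun s => ψ s i j)
        (((Vb (fun t => (α : ℂ) * Complex.exp (Complex.I * ω * t))
              (fun t => c * Complex.exp (Complex.I * ω * t)) t k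
            - (2 * Complex.I * k ^ 2) • sigma3) * ψ t) i j) t)
    (hinit : ψ 0 = 1) :
    ∀ t : ℝ,
      ψ t =
        NormedSpace.exp ((Complex.I * ω * t / 2) • sigma3) *
          NormedSpace.exp ((t : ℂ) •
            ((-(Complex.I * ω / 2)) • sigma3 - (2 * Complex.I * k ^ 2) • sigma3 +
              Vb (fun t => (α : ℂ) * Complex.exp (Complex.I * ω * t))
                (fun t => c * Complex.exp (Complex.I * ω * t)) 0 k)) := by
  intro t
  have hψ : ∀ s, HasDerivAt ψ
      (laxTimeMatrix (timeHarmonic α ω) (timeHarmonic c ω) s k * ψ s) s :=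
    fun s => Matrix.hasDerivAt_of_forall_hasDerivAt_apply (hODE s)
  rw [eq_exp_smul_mul_exp_smul_of_hasDerivAt_laxTimeMatrix α c k ω hψ t, hinit, mul_one,
    ← Complex.coe_smul, ← Complex.coe_smul, smul_smul, laxTimeMatrix]
  congr 3
  · ring
  · unfold timeHarmonic
    rw [neg_smul]
    abel

/-- For single exponential boundary data `g₀ᵇ(t) = α e^{iωt}`, `g₁ᵇ(t) = c e^{iωt}`, the
unique solution of `ψ_t + 2ik²σ₃ψ = Vᵇψ`, `ψ(0,k) = I`, is given explicitly by
`ψ(t,k) = exp((iωt/2)σ₃) · exp(t W(k))` with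
`W(k) = -(iω/2)σ₃ - 2ik²σ₃ + Vᵇ(0,k)`. -/
theorem psi_explicit_single_exponential (α ω : ℝ) (c : ℂ) (hα : 0 < α) (k : ℂ)
    (ψ : ℝ → Matrix (Fin 2) (Fin 2) ℂ)
    (hODE : ∀ t : ℝ, ∀ i j : Fin 2,
      HasDerivAt (fun s => ψ s i j)
        (((Vb (fun t => (α : ℂ) * Complex.exp (Complex.I * ω * t))
              (fun t => c * Complex.exp (Complex.I * ω * t)) t k
            - (2 * Complex.I * k ^ 2) • sigma3) * ψ t) i j) t)
    (hinit : ψ 0 = 1) :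
    ∀ t : ℝ,
      ψ t =
        NormedSpace.exp ((Complex.I * ω * t / 2) • sigma3) *
          NormedSpace.exp ((t : ℂ) •
            ((-(Complex.I * ω / 2)) • sigma3 - (2 * Complex.I * k ^ 2) • sigma3 +
              Vb (fun t => (α : ℂ) * Complex.exp (Complex.I * ω * t))
                (fun t => c * Complex.exp (Complex.I * ω * t)) 0 k)) :=
  psi_explicit_single_exponential_general α ω c k ψ hODE hinit
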